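/- arXiv:2509.24056 — 2 statements merged into one kernel-verified Lean document; each statement's English description precedes it below -/
import Mathlib

section
/- Let η > 0 with η ≤ 1, and let s, t be natural numbers with s ≤ t−1. Then ∏_{τ=s}^{t−1} (1 − η/√(τ+1)) ≤ exp(−η·(√t − √(s+1))). -/
/-! Since `1 - x ≤ exp (-x)`, the product is at most `exp (-η ∑ 1 / √(τ + 1))`, and the sum is
bounded below by telescoping `√(τ + 1) - √τ ≤ 1 / √(τ + 1)`. -/

open Finset Real

lemma prod_one_sub_le_exp_neg_sum {ι : Type*} (s : Finset ι) (f : ι → ℝ)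
    (hf : ∀ i ∈ s, f i ≤ 1) : ∏ i ∈ s, (1 - f i) ≤ exp (-∑ i ∈ s, f i) := by
  rw [← sum_neg_distrib, exp_sum]
  exact prod_le_prod (fun i hi ↦ sub_nonneg.mpr (hf i hi)) fun i _ ↦ one_sub_le_exp_neg (f i)

lemma sqrt_add_one_sub_sqrt_le_inv_sqrt_add_one {x : ℝ} (hx : 0 ≤ x) :
    √(x + 1) - √x ≤ (√(x + 1))⁻¹ := by
  have hpos : 0 < √(x + 1) := sqrt_pos.mpr (by linarith)
  have hx_le : x ≤ √x * √(x + 1) :=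
    calc x = √x * √x := (mul_self_sqrt hx).symm
      _ ≤ √x * √(x + 1) := by gcongr; linarith
  rw [← one_div, le_div_iff₀ hpos, sub_mul, mul_self_sqrt (by linarith)]
  linarith

lemma sqrt_sub_sqrt_le_sum_Ico_inv_sqrt (s t : ℕ) :
    √t - √s ≤ ∑ τ ∈ Ico s t, (√(τ + 1))⁻¹ := by
  rcases le_total s t with hst | hts
  · rw [← sum_Ico_sub (fun n : ℕ ↦ √n) hst]
    gcongr with τ
    exact_mod_cast sqrt_add_one_sub_sqrt_le_inv_sqrt_add_one (Nat.cast_nonneg τ)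
  · rw [Ico_eq_empty_of_le hts, sum_empty, sub_nonpos]
    exact sqrt_le_sqrt (by exact_mod_cast hts)

theorem prod_one_sub_eta_div_sqrt_le_general
    (η : ℝ) (hη0 : 0 < η) (hη1 : η ≤ 1) (s t : ℕ) :
    ∏ τ ∈ Finset.Icc s (t - 1), (1 - η / Real.sqrt (τ + 1)) ≤
      Real.exp (-η * (Real.sqrt t - Real.sqrt (s + 1))) := by
  have hstep : ∀ τ : ℕ, η / √(τ + 1) ≤ 1 := fun τ ↦
    div_le_one_of_le₀ (hη1.trans (one_le_sqrt.mpr (by simp))) (sqrt_nonneg _)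
  have hsum : √t - √(s + 1) ≤ ∑ τ ∈ Icc s (t - 1), (√(τ + 1))⁻¹ :=
    calc √t - √(s + 1) ≤ √t - √s := by gcongr; linarith
      _ ≤ ∑ τ ∈ Ico s t, (√(τ + 1))⁻¹ := sqrt_sub_sqrt_le_sum_Ico_inv_sqrt s t
      _ ≤ ∑ τ ∈ Icc s (t - 1), (√(τ + 1))⁻¹ :=
        sum_le_sum_of_subset_of_nonneg (fun τ ↦ by simp only [mem_Ico, mem_Icc]; omega)
          fun _ _ _ ↦ by positivity
  calc ∏ τ ∈ Icc s (t - 1), (1 - η / √(τ + 1))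
      ≤ exp (-∑ τ ∈ Icc s (t - 1), η / √(τ + 1)) :=
        prod_one_sub_le_exp_neg_sum _ _ fun τ _ ↦ hstep τ
    _ ≤ exp (-η * (√t - √(s + 1))) := by
        simp_rw [div_eq_mul_inv, ← mul_sum, neg_mul, exp_le_exp, neg_le_neg_iff]
        exact mul_le_mul_of_nonneg_left hsum hη0.le

/-- `∏_{τ=s}^{t-1} (1 - η/√(τ+1)) ≤ exp(-η (√t - √(s+1)))` for `0 < η ≤ 1` and `s ≤ t - 1`. -/
theorem prod_one_sub_eta_div_sqrt_le
    (η : ℝ) (hη0 : 0 < η) (hη1 : η ≤ 1) (s t : ℕ) (hst : s ≤ t - 1) :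
    ∏ τ ∈ Finset.Icc s (t - 1), (1 - η / Real.sqrt (τ + 1)) ≤
      Real.exp (-η * (Real.sqrt t - Real.sqrt (s + 1))) :=
  prod_one_sub_eta_div_sqrt_le_general η hη0 hη1 s t
end

section
/- Let A ∈ ℝ^{m×m} be a matrix such that every (nonempty) principal square submatrix A_{II} (rows and columns indexed by the same set I ⊆ {1,…,m}) has smallest singular value at least c > 0. Let q ∈ ℝᵐ and suppose (λ, s) ∈ ℝᵐ × ℝᵐ satisfies A·λ + q = s, λ ≥ 0 (entrywise), s ≥ 0 (entrywise), and λᵀs = 0. Then ‖λ‖ ≤ ‖q‖/c. -/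
/-! On the support `I` of `λ`, complementarity forces `s = 0`, so `A_{II} λ_I = -q_I`. Since `λ`
vanishes off `I`, `‖λ_I‖ = ‖λ‖`, hence `c ‖λ‖ ≤ ‖A_{II} λ_I‖ = ‖q_I‖ ≤ ‖q‖`. -/

noncomputable section

/-- `Vec m` is Euclidean space `ℝᵐ`. -/
abbrev Vec (m : ℕ) := EuclideanSpace ℝ (Fin m)

namespace EuclideanSpace

variable {𝕜 ι : Type*}

def restrict (I : Finset ι) (v : EuclideanSpace 𝕜 ι) : EuclideanSpace 𝕜 I :=
  WithLp.toLp 2 fun i => v i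

@[simp]
lemma restrict_apply (I : Finset ι) (v : EuclideanSpace 𝕜 ι) (i : I) :
    restrict I v i = v i := rfl

variable [RCLike 𝕜]

lemma norm_sq_restrict (I : Finset ι) (v : EuclideanSpace 𝕜 ι) :
    ‖restrict I v‖ ^ 2 = ∑ i ∈ I, ‖v i‖ ^ 2 := by
  rw [norm_sq_eq, ← Finset.sum_coe_sort I]
  rfl

variable [Fintype ι]

lemma norm_restrict_le (I : Finset ι) (v : EuclideanSpace 𝕜 ι) : ‖restrict I v‖ ≤ ‖v‖ := by
  refine le_of_sq_le_sq ?_ (norm_nonneg v)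
  rw [norm_sq_restrict, norm_sq_eq]
  exact Finset.sum_le_univ_sum_of_nonneg fun i => by positivity

lemma norm_restrict_of_support_subset {I : Finset ι} {v : EuclideanSpace 𝕜 ι}
    (hv : ∀ i ∉ I, v i = 0) : ‖restrict I v‖ = ‖v‖ := by
  refine (sq_eq_sq₀ (norm_nonneg _) (norm_nonneg _)).mp ?_
  rw [norm_sq_restrict, norm_sq_eq]
  exact Finset.sum_subset (Finset.subset_univ I) fun i _ hi => by simp [hv i hi]

end EuclideanSpace

namespace Matrix

open EuclideanSpace

variable {𝕜 : Type*} [RCLike 𝕜] {m n : Type*} [Fintype n] [DecidableEq n]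

lemma toEuclideanLin_submatrix_restrict (A : Matrix m n 𝕜) (K : Finset m) {I : Finset n}
    {v : EuclideanSpace 𝕜 n} (hv : ∀ j ∉ I, v j = 0) :
    toEuclideanLin (A.submatrix ((↑) : K → m) ((↑) : I → n)) (restrict I v) =
      restrict K (toEuclideanLin A v) := by
  ext i
  simp only [toLpLin_apply, restrict_apply, mulVec, dotProduct, submatrix_apply]
  rw [Finset.sum_coe_sort I fun j => A i j * v j]
  exact Finset.sum_subset (Finset.subset_univ I) fun j _ hj => by simp [hv j hj]

end Matrix

lemma Finset.eq_zero_of_sum_mul_eq_zero_of_ne_zero {ι R : Type*} [Fintype ι] [Semiring R]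
    [PartialOrder R] [IsOrderedRing R] [NoZeroDivisors R] {f g : ι → R} (hf : ∀ j, 0 ≤ f j)
    (hg : ∀ j, 0 ≤ g j) (h : ∑ j, f j * g j = 0) {j : ι} (hj : f j ≠ 0) : g j = 0 :=
  (mul_eq_zero.mp ((sum_eq_zero_iff_of_nonneg fun j _ => mul_nonneg (hf j) (hg j)).mp h j
    (mem_univ j))).resolve_left hj

open EuclideanSpace Matrix

/-- **Multiplier bound for the linear complementarity system.**
If every nonempty principal submatrix `A_{II}` of `A` has smallest singular value at least
`c > 0` (i.e. `‖A_{II} v‖ ≥ c ‖v‖` for all `v`), and `(λ, s)` solves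
`A λ + q = s, λ ≥ 0, s ≥ 0, λᵀ s = 0`, then `‖λ‖ ≤ ‖q‖ / c`. -/
theorem lcp_multiplier_norm_bound
    (m : ℕ) (A : Matrix (Fin m) (Fin m) ℝ) (c : ℝ) (hc : 0 < c)
    (hsub : ∀ I : Finset (Fin m), I.Nonempty →
      ∀ v : EuclideanSpace ℝ {i // i ∈ I},
        c * ‖v‖ ≤ ‖Matrix.toEuclideanLin
          (A.submatrix (fun i : {i // i ∈ I} => (i : Fin m)) fun i : {i // i ∈ I} => (i : Fin m))
          v‖)
    (q lam s : Vec m)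
    (hsys : Matrix.toEuclideanLin A lam + q = s)
    (hlam : ∀ j, 0 ≤ lam j) (hs : ∀ j, 0 ≤ s j)
    (hcs : ∑ j, lam j * s j = 0) :
    ‖lam‖ ≤ ‖q‖ / c := by
  set I : Finset (Fin m) := Finset.univ.filter (lam · ≠ 0)
  have hlam_supp : ∀ j ∉ I, lam j = 0 := by simp [I]
  rcases I.eq_empty_or_nonempty with hI | hI
  · have : lam = 0 := by
      ext j
      exact hlam_supp j (hI ▸ Finset.notMem_empty j)
    simp only [this, norm_zero]
    positivity
  have hs_supp : ∀ j ∈ I, s j = 0 := fun j hj =>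
    Finset.eq_zero_of_sum_mul_eq_zero_of_ne_zero hlam hs hcs (Finset.mem_filter.mp hj).2
  have hA_lam : restrict I (toEuclideanLin A lam) = restrict I (-q) := by
    ext i
    have := congrArg (· i) hsys
    simp only [PiLp.add_apply, hs_supp i i.2] at this
    simp only [restrict_apply, PiLp.neg_apply]
    exact eq_neg_of_add_eq_zero_left this
  rw [le_div_iff₀ hc]
  calc ‖lam‖ * c = c * ‖restrict I lam‖ := by
        rw [norm_restrict_of_support_subset hlam_supp, mul_comm]
    _ ≤ ‖toEuclideanLin (A.submatrix ((↑) : I → Fin m) ((↑) : I → Fin m)) (restrict I lam)‖ :=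
        hsub I hI _
    _ = ‖restrict I (-q)‖ := by rw [toEuclideanLin_submatrix_restrict A I hlam_supp, hA_lam]
    _ ≤ ‖-q‖ := norm_restrict_le I (-q)
    _ = ‖q‖ := norm_neg q

end
end
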